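/- arXiv:1706.05184 — 2 statements merged into one kernel-verified Lean document; each statement's English description precedes it below -/
import Mathlib

section
/- The number of symmetric non-crossing partial matchings satisfies S(n) = 2 S(n-2) + \sum_{i=2}^{⌊n/2⌋} M(i-2) S(n-2i) for n ≥ 2, where M is the Motzkin number sequence. -/
/-- `P` is a non-crossing partial matching of the points `0, …, n-1` on a line:
pairs are listed with smaller endpoint first, all endpoints are distinct, and
no two pairs cross. -/
def IsNCMatching (n : ℕ) (P : Finset (Fin n × Fin n)) : Prop :=
  (∀ p ∈ P, p.1 < p.2) ∧
  (∀ p ∈ P, ∀ q ∈ P, p ≠ q →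
    p.1 ≠ q.1 ∧ p.1 ≠ q.2 ∧ p.2 ≠ q.1 ∧ p.2 ≠ q.2) ∧
  (∀ p ∈ P, ∀ q ∈ P, ¬(p.1 < q.1 ∧ q.1 < p.2 ∧ p.2 < q.2))

/-- The `n`-th Motzkin number: the number of non-crossing partial matchings of
`n` points on a line. -/
noncomputable def motzkin (n : ℕ) : ℕ :=
  {P : Finset (Fin n × Fin n) | IsNCMatching n P}.ncard

/-- A matching on `n` points is symmetric if it is invariant under the
reflection `k ↦ n - 1 - k` (i.e. `k ↦ n + 1 - k` in 1-based labelling). -/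
def IsSymmetricMatching (n : ℕ) (P : Finset (Fin n × Fin n)) : Prop :=
  ∀ p ∈ P, (p.2.rev, p.1.rev) ∈ P

/-- `S n`: the number of symmetric non-crossing partial matchings of `n` points. -/
noncomputable def symMatchings (n : ℕ) : ℕ :=
  {P : Finset (Fin n × Fin n) | IsNCMatching n P ∧ IsSymmetricMatching n P}.ncard


/-!
Classify a symmetric non-crossing matching of `n ≥ 2` points `0, …, n - 1` by the partner
of `0`. If `0` is unmatched then so is `n - 1`, by symmetry, and if `0` is matched with `n - 1`
that arc can be removed; either way what remains is an arbitrary symmetric matching of the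
`n - 2` inner points. Otherwise `0` is matched with some `i - 1 < n - 1` and, by symmetry,
`n - i` with `n - 1`; these two arcs do not cross, so `2 i ≤ n`, and every other arc lies under
one of them or strictly between them. The matching is therefore an arbitrary matching of the
`i - 2` points under the first arc, its mirror image, and a symmetric matching of the `n - 2 i`
middle points.
-/

open Finset

namespace NCMatching

variable {m n : ℕ}

section Relabel

variable {f : Fin m → Fin n}

def pullback (f : Fin m → Fin n) (P : Finset (Fin n × Fin n)) : Finset (Fin m × Fin m) :=
  univ.filter fun q => Prod.map f f q ∈ P

@[simp]
theorem mem_pullback {P : Finset (Fin n × Fin n)} {q : Fin m × Fin m} :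
    q ∈ pullback f P ↔ Prod.map f f q ∈ P := by
  simp [pullback]

theorem pullback_union (P P' : Finset (Fin n × Fin n)) :
    pullback f (P ∪ P') = pullback f P ∪ pullback f P' := by
  ext q; simp

theorem pullback_eq_empty {P : Finset (Fin n × Fin n)} (h : ∀ p ∈ P, p.1 ∉ Set.range f) :
    pullback f P = ∅ := by
  ext q
  simpa using fun hq => h _ hq ⟨q.1, rfl⟩

theorem pullback_image (hf : f.Injective) (Q : Finset (Fin m × Fin m)) :
    pullback f (Q.image (Prod.map f f)) = Q := by
  ext q
  simp [(hf.prodMap hf).mem_finset_image]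

theorem mem_image_pullback {P : Finset (Fin n × Fin n)} {p : Fin n × Fin n} :
    p ∈ (pullback f P).image (Prod.map f f) ↔
      p ∈ P ∧ p.1 ∈ Set.range f ∧ p.2 ∈ Set.range f := by
  constructor
  · intro hp
    obtain ⟨q, hq, rfl⟩ := mem_image.1 hp
    exact ⟨mem_pullback.1 hq, ⟨q.1, rfl⟩, ⟨q.2, rfl⟩⟩
  · rintro ⟨hp, ⟨a, ha⟩, ⟨b, hb⟩⟩
    exact mem_image.2 ⟨(a, b), by simpa [ha, hb], by simp [ha, hb]⟩

theorem _root_.IsNCMatching.image (hf : StrictMono f) {Q : Finset (Fin m × Fin m)}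
    (hQ : IsNCMatching m Q) : IsNCMatching n (Q.image (Prod.map f f)) := by
  obtain ⟨hlt, hdisj, hcross⟩ := hQ
  simp only [IsNCMatching, forall_mem_image, Prod.map_fst, Prod.map_snd, hf.lt_iff_lt,
    hf.injective.ne_iff]
  exact ⟨hlt, fun p hp q hq hne => hdisj p hp q hq (ne_of_apply_ne _ hne), hcross⟩

theorem _root_.IsNCMatching.pullback (hf : StrictMono f) {P : Finset (Fin n × Fin n)}
    (hP : IsNCMatching n P) : IsNCMatching m (pullback f P) := by
  obtain ⟨hlt, hdisj, hcross⟩ := hP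
  refine ⟨fun q hq => ?_, fun p hp q hq hne => ?_, fun p hp q hq => ?_⟩
  · exact hf.lt_iff_lt.1 (hlt _ (mem_pullback.1 hq))
  · simpa only [Prod.map_fst, Prod.map_snd, hf.injective.ne_iff] using
      hdisj _ (mem_pullback.1 hp) _ (mem_pullback.1 hq) ((hf.injective.prodMap hf.injective).ne hne)
  · simpa only [Prod.map_fst, Prod.map_snd, hf.lt_iff_lt] using
      hcross _ (mem_pullback.1 hp) _ (mem_pullback.1 hq)

theorem _root_.IsSymmetricMatching.image (hf : ∀ a, (f a).rev = f a.rev)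
    {Q : Finset (Fin m × Fin m)} (hQ : IsSymmetricMatching m Q) :
    IsSymmetricMatching n (Q.image (Prod.map f f)) := by
  simp only [IsSymmetricMatching, forall_mem_image, Prod.map_fst, Prod.map_snd, hf]
  exact fun q hq => mem_image_of_mem _ (hQ q hq)

theorem _root_.IsSymmetricMatching.pullback (hf : ∀ a, (f a).rev = f a.rev)
    {P : Finset (Fin n × Fin n)} (hP : IsSymmetricMatching n P) :
    IsSymmetricMatching m (pullback f P) := by
  intro q hq
  simpa [hf] using hP _ (mem_pullback.1 hq)

end Relabel

def shift (c : ℕ) (h : c + m ≤ n := by omega) (a : Fin m) : Fin n := ⟨c + a, by omega⟩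

section Shift

variable {c : ℕ} {h : c + m ≤ n}

@[simp]
theorem val_shift (a : Fin m) : (shift c h a : ℕ) = c + a := rfl

theorem strictMono_shift : StrictMono (shift c h) := fun a b hab => by
  simp only [Fin.lt_def, val_shift] at hab ⊢; omega

theorem rev_shift (hc : c + m + c = n) (a : Fin m) : (shift c h a).rev = shift c h a.rev := by
  ext; simp only [Fin.val_rev, val_shift]; omega

theorem mem_range_shift {x : Fin n} :
    x ∈ Set.range (shift c h) ↔ c ≤ (x : ℕ) ∧ (x : ℕ) < c + m := by
  refine ⟨?_, fun hx => ⟨⟨x - c, by omega⟩, by ext; simp; omega⟩⟩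
  rintro ⟨a, rfl⟩
  simp

theorem bounds_of_mem_image_shift {Q : Finset (Fin m × Fin m)} {p : Fin n × Fin n}
    (hp : p ∈ Q.image (Prod.map (shift c h) (shift c h))) :
    c ≤ (p.1 : ℕ) ∧ (p.1 : ℕ) < c + m ∧ c ≤ (p.2 : ℕ) ∧ (p.2 : ℕ) < c + m := by
  obtain ⟨q, -, rfl⟩ := mem_image.1 hp
  simp

end Shift

def mirrorPair (p : Fin n × Fin n) : Fin n × Fin n := (p.2.rev, p.1.rev)

@[simp]
theorem mirrorPair_mirrorPair (p : Fin n × Fin n) : mirrorPair (mirrorPair p) = p := by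
  simp [mirrorPair]

def mirror (P : Finset (Fin n × Fin n)) : Finset (Fin n × Fin n) := P.image mirrorPair

theorem mem_mirror {P : Finset (Fin n × Fin n)} {p : Fin n × Fin n} :
    p ∈ mirror P ↔ mirrorPair p ∈ P := by
  refine ⟨fun hp => ?_, fun hp => mem_image.2 ⟨_, hp, mirrorPair_mirrorPair p⟩⟩
  obtain ⟨q, hq, rfl⟩ := mem_image.1 hp
  simpa

theorem _root_.IsSymmetricMatching.mirrorPair_mem_iff {P : Finset (Fin n × Fin n)}
    (hP : IsSymmetricMatching n P) {p : Fin n × Fin n} : mirrorPair p ∈ P ↔ p ∈ P :=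
  ⟨fun h => mirrorPair_mirrorPair p ▸ hP _ h, hP p⟩

theorem _root_.IsNCMatching.mirror {P : Finset (Fin n × Fin n)} (hP : IsNCMatching n P) :
    IsNCMatching n (mirror P) := by
  obtain ⟨hlt, hdisj, hcross⟩ := hP
  simp only [IsNCMatching, NCMatching.mirror, forall_mem_image, mirrorPair, ne_eq,
    Fin.rev_lt_rev, Fin.rev_inj]
  refine ⟨hlt, fun p hp q hq hne => ?_, fun p hp q hq => ?_⟩
  · have := hdisj p hp q hq (by contrapose! hne; simp [hne])
    tauto
  · have := hcross q hq p hp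
    tauto

theorem isSymmetricMatching_union_mirror (P : Finset (Fin n × Fin n)) :
    IsSymmetricMatching n (P ∪ mirror P) := by
  intro p hp
  change mirrorPair p ∈ _
  rcases mem_union.1 hp with hp | hp
  · exact mem_union_right _ (mem_mirror.2 (by simpa))
  · exact mem_union_left _ (mem_mirror.1 hp)

theorem _root_.IsSymmetricMatching.union {P P' : Finset (Fin n × Fin n)}
    (hP : IsSymmetricMatching n P) (hP' : IsSymmetricMatching n P') :
    IsSymmetricMatching n (P ∪ P') := by
  intro p hp
  rcases mem_union.1 hp with hp | hp
  exacts [mem_union_left _ (hP p hp), mem_union_right _ (hP' p hp)]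

theorem _root_.IsNCMatching.union_of_window {X Y : Finset (Fin n × Fin n)} (a b : ℕ)
    (hX : IsNCMatching n X) (hY : IsNCMatching n Y)
    (hXin : ∀ p ∈ X, a ≤ (p.1 : ℕ) ∧ (p.2 : ℕ) < b)
    (hYout : ∀ q ∈ Y, ((q.1 : ℕ) < a ∨ b ≤ q.1) ∧ ((q.2 : ℕ) < a ∨ b ≤ q.2)) :
    IsNCMatching n (X ∪ Y) := by
  obtain ⟨hXlt, hXdisj, hXcross⟩ := hX
  obtain ⟨hYlt, hYdisj, hYcross⟩ := hY
  refine ⟨fun p hp => ?_, fun p hp q hq hne => ?_, fun p hp q hq => ?_⟩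
  · rcases mem_union.1 hp with hp | hp
    exacts [hXlt p hp, hYlt p hp]
  · rcases mem_union.1 hp with hp | hp <;> rcases mem_union.1 hq with hq | hq
    · exact hXdisj p hp q hq hne
    · have := hXin p hp; have := hXlt p hp; have := hYout q hq; omega
    · have := hXin q hq; have := hXlt q hq; have := hYout p hp; omega
    · exact hYdisj p hp q hq hne
  · rcases mem_union.1 hp with hp | hp <;> rcases mem_union.1 hq with hq | hq
    · exact hXcross p hp q hq
    · have := hXin p hp; have := hYout q hq; omega
    · have := hXin q hq; have := hYout p hp; omega
    · exact hYcross p hp q hq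

def MatchesZeroWith (P : Finset (Fin n × Fin n)) (j : ℕ) : Prop :=
  ∃ p ∈ P, (p.1 : ℕ) = 0 ∧ (p.2 : ℕ) = j

theorem matchesZeroWith_unique {P : Finset (Fin n × Fin n)} (hP : IsNCMatching n P) {j j' : ℕ}
    (h : MatchesZeroWith P j) (h' : MatchesZeroWith P j') : j = j' := by
  obtain ⟨p, hp, hp1, rfl⟩ := h
  obtain ⟨q, hq, hq1, rfl⟩ := h'
  by_contra hne
  exact (hP.2.1 p hp q hq (by rintro rfl; exact hne rfl)).1 (by omega)

theorem matchesZeroWith_bounds {P : Finset (Fin n × Fin n)} (hNC : IsNCMatching n P)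
    (hSym : IsSymmetricMatching n P) {j : ℕ} (h : MatchesZeroWith P j) (hj : j + 1 ≠ n) :
    2 ≤ j + 1 ∧ 2 * (j + 1) ≤ n := by
  obtain ⟨s, hs, hs1, rfl⟩ := h
  -- the arc from `0` neither meets nor crosses its mirror image, which ends at `n - 1`
  have hs' : mirrorPair s ∈ P := hSym s hs
  have hne : s ≠ mirrorPair s := by
    intro h
    have := congrArg (fun p => (p.2 : ℕ)) h
    simp only [mirrorPair, Fin.val_rev] at this
    omega
  have d := hNC.2.1 s hs _ hs' hne
  have c := hNC.2.2 s hs _ hs'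
  have := hNC.1 s hs
  simp only [mirrorPair, Fin.val_rev, ne_eq, Fin.ext_iff, Fin.lt_def] at d c
  omega

def outerArc (m : ℕ) : Fin (m + 2) × Fin (m + 2) := (0, Fin.last (m + 1))

theorem matchesZeroWith_last_iff {P : Finset (Fin (m + 2) × Fin (m + 2))} :
    MatchesZeroWith P (m + 1) ↔ outerArc m ∈ P := by
  refine ⟨fun ⟨p, hp, h1, h2⟩ => ?_, fun h => ⟨_, h, rfl, rfl⟩⟩
  convert hp
  ext <;> simp [outerArc, h1, h2]

def closeArc (R : Finset (Fin m × Fin m)) : Finset (Fin (m + 2) × Fin (m + 2)) :=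
  insert (outerArc m) (R.image (Prod.map (shift 1) (shift 1)))

theorem isNCMatching_closeArc {R : Finset (Fin m × Fin m)} (hR : IsNCMatching m R) :
    IsNCMatching (m + 2) (closeArc R) := by
  have hArc : IsNCMatching (m + 2) {outerArc m} := by
    refine ⟨?_, ?_, ?_⟩ <;> simp [outerArc, Fin.pos_iff_ne_zero]
  rw [closeArc, insert_eq, union_comm]
  refine (hR.image strictMono_shift).union_of_window 1 (m + 1) hArc (fun p hp => ?_) ?_
  · have := bounds_of_mem_image_shift hp
    omega
  · simp [outerArc]

theorem isSymmetricMatching_closeArc {R : Finset (Fin m × Fin m)}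
    (hR : IsSymmetricMatching m R) : IsSymmetricMatching (m + 2) (closeArc R) := by
  have hArc : IsSymmetricMatching (m + 2) {outerArc m} := by
    simp [IsSymmetricMatching, outerArc]
  rw [closeArc, insert_eq]
  exact hArc.union (hR.image (rev_shift (by omega)))

theorem pullback_closeArc (R : Finset (Fin m × Fin m)) : pullback (shift 1) (closeArc R) = R := by
  rw [closeArc, insert_eq, pullback_union, pullback_image strictMono_shift.injective,
    pullback_eq_empty, empty_union]
  intro p hp
  rw [mem_singleton.1 hp, mem_range_shift]
  simp [outerArc]

theorem closeArc_pullback {P : Finset (Fin (m + 2) × Fin (m + 2))} (hP : IsNCMatching (m + 2) P)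
    (hArc : outerArc m ∈ P) : closeArc (pullback (shift 1) P) = P := by
  ext p
  rw [closeArc, mem_insert, mem_image_pullback, mem_range_shift, mem_range_shift]
  by_cases hp : p = outerArc m
  · simp [hp, hArc]
  simp only [hp, false_or, and_iff_left_iff_imp]
  intro hpP
  have hdisj := hP.2.1 p hpP _ hArc hp
  have := hP.1 p hpP
  simp only [outerArc, ne_eq, Fin.ext_iff, Fin.val_zero, Fin.val_last] at hdisj
  omega

theorem matchesZeroWith_pullback_shift_zero {i : ℕ} (hi : i ≤ n) {P : Finset (Fin n × Fin n)}
    {j : ℕ} (hP : MatchesZeroWith P j) (hj : j < i) :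
    MatchesZeroWith (pullback (shift 0 (by omega) : Fin i → Fin n) P) j := by
  obtain ⟨p, hp, h1, h2⟩ := hP
  refine ⟨(⟨0, by omega⟩, ⟨j, hj⟩), ?_, rfl, rfl⟩
  rw [mem_pullback]
  convert hp
  ext <;> simp [h1, h2]

section Glue

variable {i r : ℕ}

def glue (K : Finset (Fin i × Fin i)) (R : Finset (Fin r × Fin r)) :
    Finset (Fin (i + r + i) × Fin (i + r + i)) :=
  (K.image (Prod.map (shift 0) (shift 0)) ∪ mirror (K.image (Prod.map (shift 0) (shift 0)))) ∪
    R.image (Prod.map (shift i) (shift i))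

theorem bounds_of_mem_mirror_image_shift_zero {K : Finset (Fin i × Fin i)}
    {p : Fin (i + r + i) × Fin (i + r + i)}
    (hp : p ∈ mirror (K.image (Prod.map (shift 0) (shift 0)))) :
    i + r ≤ (p.1 : ℕ) ∧ i + r ≤ (p.2 : ℕ) := by
  have := bounds_of_mem_image_shift (mem_mirror.1 hp)
  simp only [mirrorPair, Fin.val_rev] at this
  omega

theorem isNCMatching_glue {K : Finset (Fin i × Fin i)} {R : Finset (Fin r × Fin r)}
    (hK : IsNCMatching i K) (hR : IsNCMatching r R) : IsNCMatching (i + r + i) (glue K R) := by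
  have hL : IsNCMatching (i + r + i) (K.image (Prod.map (shift 0) (shift 0))) :=
    hK.image strictMono_shift
  have hLL := hL.union_of_window 0 i hL.mirror
    (fun p hp => by have := bounds_of_mem_image_shift hp; omega)
    (fun q hq => by have := bounds_of_mem_mirror_image_shift_zero hq; omega)
  rw [glue, union_comm]
  refine (hR.image strictMono_shift).union_of_window i (i + r) hLL
    (fun p hp => by have := bounds_of_mem_image_shift hp; omega) (fun q hq => ?_)
  rcases mem_union.1 hq with hq | hq
  · have := bounds_of_mem_image_shift hq; omega
  · have := bounds_of_mem_mirror_image_shift_zero hq; omega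

theorem isSymmetricMatching_glue (K : Finset (Fin i × Fin i)) {R : Finset (Fin r × Fin r)}
    (hR : IsSymmetricMatching r R) : IsSymmetricMatching (i + r + i) (glue K R) :=
  (isSymmetricMatching_union_mirror _).union (hR.image (rev_shift (by omega)))

theorem matchesZeroWith_glue {K : Finset (Fin i × Fin i)} (R : Finset (Fin r × Fin r)) {j : ℕ}
    (hK : MatchesZeroWith K j) : MatchesZeroWith (glue K R) j := by
  obtain ⟨p, hp, h1, h2⟩ := hK
  exact ⟨_, mem_union_left _ (mem_union_left _ (mem_image_of_mem _ hp)), by simpa, by simpa⟩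

theorem pullback_shift_zero_glue (K : Finset (Fin i × Fin i)) (R : Finset (Fin r × Fin r)) :
    pullback (shift 0) (glue K R) = K := by
  rw [glue, pullback_union, pullback_union, pullback_image strictMono_shift.injective,
    pullback_eq_empty, pullback_eq_empty, union_empty, union_empty]
  · intro p hp
    have := bounds_of_mem_image_shift hp
    rw [mem_range_shift]; omega
  · intro p hp
    have := bounds_of_mem_mirror_image_shift_zero hp
    rw [mem_range_shift]; omega

theorem pullback_shift_glue (K : Finset (Fin i × Fin i)) (R : Finset (Fin r × Fin r)) :
    pullback (shift i) (glue K R) = R := by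
  rw [glue, pullback_union, pullback_union, pullback_image strictMono_shift.injective,
    pullback_eq_empty, pullback_eq_empty, empty_union, empty_union]
  · intro p hp
    have := bounds_of_mem_mirror_image_shift_zero hp
    rw [mem_range_shift]; omega
  · intro p hp
    have := bounds_of_mem_image_shift hp
    rw [mem_range_shift]; omega

theorem bounds_of_matchesZeroWith {P : Finset (Fin (i + r + i) × Fin (i + r + i))}
    (hNC : IsNCMatching (i + r + i) P) (hSym : IsSymmetricMatching (i + r + i) P)
    (hZ : MatchesZeroWith P (i - 1)) :
    ∀ p ∈ P, (p.2 : ℕ) < i ∨ (i ≤ (p.1 : ℕ) ∧ (p.2 : ℕ) < i + r) ∨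
      i + r ≤ (p.1 : ℕ) := by
  obtain ⟨s, hs, hs1, hs2⟩ := hZ
  -- every other pair avoids, and does not cross, the arc `s` and its mirror image
  have hs' : mirrorPair s ∈ P := hSym s hs
  intro p hp
  have := hNC.1 p hp
  have := hNC.1 s hs
  by_cases h1 : p = s
  · subst h1; omega
  by_cases h2 : p = mirrorPair s
  · subst h2; simp only [mirrorPair, Fin.val_rev]; omega
  have d1 := hNC.2.1 p hp s hs h1
  have d2 := hNC.2.1 p hp _ hs' h2
  have c1 := hNC.2.2 s hs p hp
  have c2 := hNC.2.2 p hp _ hs'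
  simp only [mirrorPair, Fin.val_rev, ne_eq, Fin.ext_iff, Fin.lt_def] at d1 d2 c1 c2
  omega

theorem glue_pullback {P : Finset (Fin (i + r + i) × Fin (i + r + i))}
    (hNC : IsNCMatching (i + r + i) P) (hSym : IsSymmetricMatching (i + r + i) P)
    (hZ : MatchesZeroWith P (i - 1)) : glue (pullback (shift 0) P) (pullback (shift i) P) = P := by
  ext p
  simp only [glue, mem_union, mem_mirror, mem_image_pullback, mem_range_shift,
    hSym.mirrorPair_mem_iff]
  refine ⟨fun h => by rcases h with (h | h) | h <;> exact h.1, fun hp => ?_⟩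
  have := bounds_of_matchesZeroWith hNC hSym hZ p hp
  have := hNC.1 p hp
  simp only [hp, true_and, mirrorPair, Fin.val_rev]
  omega

end Glue

section Counting

open scoped Classical

noncomputable def ncMatchings (n : ℕ) : Finset (Finset (Fin n × Fin n)) :=
  univ.filter (IsNCMatching n)

noncomputable def symNCMatchings (n : ℕ) : Finset (Finset (Fin n × Fin n)) :=
  univ.filter fun P => IsNCMatching n P ∧ IsSymmetricMatching n P

@[simp]
theorem mem_ncMatchings {P : Finset (Fin n × Fin n)} :
    P ∈ ncMatchings n ↔ IsNCMatching n P := by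
  simp [ncMatchings]

@[simp]
theorem mem_symNCMatchings {P : Finset (Fin n × Fin n)} :
    P ∈ symNCMatchings n ↔ IsNCMatching n P ∧ IsSymmetricMatching n P := by
  simp [symNCMatchings]

theorem motzkin_eq_card (n : ℕ) : motzkin n = (ncMatchings n).card := by
  rw [motzkin, ← Set.ncard_coe_finset]
  congr 1; ext; simp

theorem symMatchings_eq_card (n : ℕ) : symMatchings n = (symNCMatchings n).card := by
  rw [symMatchings, ← Set.ncard_coe_finset]
  congr 1; ext; simp

theorem card_symNCMatchings_filter_zero_unmatched (hn : 2 ≤ n) :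
    ((symNCMatchings n).filter fun P => ∀ p ∈ P, (p.1 : ℕ) ≠ 0).card =
      (symNCMatchings (n - 2)).card := by
  obtain ⟨m, rfl⟩ := Nat.exists_eq_add_of_le' hn
  rw [Nat.add_sub_cancel]
  refine card_nbij' (pullback (shift 1)) (fun R => R.image (Prod.map (shift 1) (shift 1)))
    (fun P hP => ?_) (fun R hR => ?_) (fun P hP => ?_) (fun R _ => ?_)
  · simp only [mem_coe, mem_filter, mem_symNCMatchings] at hP ⊢
    exact ⟨hP.1.1.pullback strictMono_shift, hP.1.2.pullback (rev_shift (by omega))⟩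
  · simp only [mem_coe, mem_filter, mem_symNCMatchings] at hR ⊢
    refine ⟨⟨hR.1.image strictMono_shift, hR.2.image (rev_shift (by omega))⟩,
      fun p hp => ?_⟩
    have := bounds_of_mem_image_shift hp
    omega
  · simp only [mem_coe, mem_filter, mem_symNCMatchings] at hP
    obtain ⟨⟨hNC, hSym⟩, hzero⟩ := hP
    ext p
    simp only [mem_image_pullback, mem_range_shift, and_iff_left_iff_imp]
    intro hp
    -- `n - 1` is unmatched as well, being the mirror image of `0`
    have hlast := hzero _ (hSym p hp)
    have := hNC.1 p hp
    simp only [Fin.val_rev] at hlast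
    have := hzero p hp
    omega
  · exact pullback_image strictMono_shift.injective R

theorem card_ncMatchings_filter_matchesZeroWith_pred (hn : 2 ≤ n) :
    ((ncMatchings n).filter (MatchesZeroWith · (n - 1))).card = (ncMatchings (n - 2)).card := by
  obtain ⟨m, rfl⟩ := Nat.exists_eq_add_of_le' hn
  rw [Nat.add_sub_cancel, show m + 2 - 1 = m + 1 by omega]
  refine card_nbij' (pullback (shift 1)) closeArc (fun P hP => ?_) (fun R hR => ?_)
    (fun P hP => ?_) (fun R _ => pullback_closeArc R)
  · simp only [mem_coe, mem_filter, mem_ncMatchings] at hP ⊢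
    exact hP.1.pullback strictMono_shift
  · simp only [mem_coe, mem_filter, mem_ncMatchings] at hR ⊢
    exact ⟨isNCMatching_closeArc hR, matchesZeroWith_last_iff.2 (mem_insert_self _ _)⟩
  · simp only [mem_coe, mem_filter, mem_ncMatchings] at hP
    exact closeArc_pullback hP.1 (matchesZeroWith_last_iff.1 hP.2)

theorem card_symNCMatchings_filter_matchesZeroWith_pred (hn : 2 ≤ n) :
    ((symNCMatchings n).filter (MatchesZeroWith · (n - 1))).card =
      (symNCMatchings (n - 2)).card := by
  obtain ⟨m, rfl⟩ := Nat.exists_eq_add_of_le' hn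
  rw [Nat.add_sub_cancel, show m + 2 - 1 = m + 1 by omega]
  refine card_nbij' (pullback (shift 1)) closeArc (fun P hP => ?_) (fun R hR => ?_)
    (fun P hP => ?_) (fun R _ => pullback_closeArc R)
  · simp only [mem_coe, mem_filter, mem_symNCMatchings] at hP ⊢
    exact ⟨hP.1.1.pullback strictMono_shift, hP.1.2.pullback (rev_shift (by omega))⟩
  · simp only [mem_coe, mem_filter, mem_symNCMatchings] at hR ⊢
    exact ⟨⟨isNCMatching_closeArc hR.1, isSymmetricMatching_closeArc hR.2⟩,
      matchesZeroWith_last_iff.2 (mem_insert_self _ _)⟩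
  · simp only [mem_coe, mem_filter, mem_symNCMatchings] at hP
    exact closeArc_pullback hP.1.1 (matchesZeroWith_last_iff.1 hP.2)

theorem card_symNCMatchings_filter_matchesZeroWith {i : ℕ} (hi : 2 ≤ i) (hn : 2 * i ≤ n) :
    ((symNCMatchings n).filter (MatchesZeroWith · (i - 1))).card =
      motzkin (i - 2) * symMatchings (n - 2 * i) := by
  obtain ⟨r, rfl⟩ : ∃ r, n = i + r + i := ⟨n - 2 * i, by omega⟩
  rw [show i + r + i - 2 * i = r by omega, motzkin_eq_card, symMatchings_eq_card,
    ← card_ncMatchings_filter_matchesZeroWith_pred hi, ← card_product]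
  refine card_nbij' (fun P => (pullback (shift 0) P, pullback (shift i) P))
    (fun KR => glue KR.1 KR.2) (fun P hP => ?_) (fun KR hKR => ?_) (fun P hP => ?_)
    (fun KR _ => ?_)
  · simp only [mem_coe, mem_filter, mem_symNCMatchings, mem_product, mem_ncMatchings] at hP ⊢
    exact ⟨⟨hP.1.1.pullback strictMono_shift,
      matchesZeroWith_pullback_shift_zero (by omega) hP.2 (by omega)⟩,
      hP.1.1.pullback strictMono_shift, hP.1.2.pullback (rev_shift (by omega))⟩
  · simp only [mem_coe, mem_filter, mem_symNCMatchings, mem_product, mem_ncMatchings] at hKR ⊢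
    exact ⟨⟨isNCMatching_glue hKR.1.1 hKR.2.1, isSymmetricMatching_glue _ hKR.2.2⟩,
      matchesZeroWith_glue _ hKR.1.2⟩
  · simp only [mem_coe, mem_filter, mem_symNCMatchings] at hP
    exact glue_pullback hP.1.1 hP.1.2 hP.2
  · exact Prod.ext (pullback_shift_zero_glue _ _) (pullback_shift_glue _ _)

theorem card_symNCMatchings_eq_sum (hn : 2 ≤ n) :
    (symNCMatchings n).card =
      ((symNCMatchings n).filter fun P => ∀ p ∈ P, (p.1 : ℕ) ≠ 0).card +
        ∑ i ∈ insert n (Icc 2 (n / 2)),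
          ((symNCMatchings n).filter (MatchesZeroWith · (i - 1))).card := by
  -- `0` is matched with `i - 1`, where `i = n` or `2 ≤ i ≤ n / 2` by `matchesZeroWith_bounds`
  rw [← card_filter_add_card_filter_not (fun P => ∀ p ∈ P, (p.1 : ℕ) ≠ 0),
    ← card_biUnion]
  · congr 2
    ext P
    simp only [mem_filter, mem_biUnion, mem_insert, mem_Icc, not_forall, not_not]
    constructor
    · rintro ⟨hP, p, hp, hp1⟩
      have hZ : MatchesZeroWith P p.2 := ⟨p, hp, hp1, rfl⟩
      refine ⟨p.2 + 1, ?_, hP, by simpa using hZ⟩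
      by_cases hj : (p.2 : ℕ) + 1 = n
      · exact Or.inl hj
      · rw [mem_symNCMatchings] at hP
        have := matchesZeroWith_bounds hP.1 hP.2 hZ hj
        omega
    · rintro ⟨i, -, hP, p, hp, hp1, -⟩
      exact ⟨hP, p, hp, hp1⟩
  · intro i hi i' hi' hne
    simp only [coe_insert, Set.mem_insert_iff, mem_coe, mem_Icc] at hi hi'
    refine disjoint_filter.2 fun P hP h h' => hne ?_
    have := matchesZeroWith_unique (mem_symNCMatchings.1 hP).1 h h'
    omega

end Counting

end NCMatching

open NCMatching

theorem symMatchings_recurrence (n : ℕ) (hn : 2 ≤ n) :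
    symMatchings n = 2 * symMatchings (n - 2) +
      ∑ i ∈ Finset.Icc 2 (n / 2), motzkin (i - 2) * symMatchings (n - 2 * i) := by
  have hn_notMem : n ∉ Icc 2 (n / 2) := by
    rw [mem_Icc]; omega
  rw [symMatchings_eq_card, card_symNCMatchings_eq_sum hn, sum_insert hn_notMem,
    card_symNCMatchings_filter_zero_unmatched hn,
    card_symNCMatchings_filter_matchesZeroWith_pred hn, ← symMatchings_eq_card,
    sum_congr rfl fun i hi => card_symNCMatchings_filter_matchesZeroWith (mem_Icc.1 hi).1
      (by have := (mem_Icc.1 hi).2; omega)]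
  ring
end

section
/- The polynomial p(z) = 2z^5 + 3z^4 - 7z^3 + 12z^2 - 7z + 1 has a real root in the open interval (0.21, 0.2105), and hence the constant λ defined as the reciprocal of the smallest-modulus root satisfies 4.75 < λ < 4.76. -/
theorem root_location :
    (∃ x : ℝ, 0.21 < x ∧ x < 0.2105 ∧
      2 * x ^ 5 + 3 * x ^ 4 - 7 * x ^ 3 + 12 * x ^ 2 - 7 * x + 1 = 0) ∧
    (∃ x : ℝ, 2 * x ^ 5 + 3 * x ^ 4 - 7 * x ^ 3 + 12 * x ^ 2 - 7 * x + 1 = 0 ∧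
      4.75 < 1 / x ∧ 1 / x < 4.76) := by
  set f : ℝ → ℝ := fun x => 2 * x ^ 5 + 3 * x ^ 4 - 7 * x ^ 3 + 12 * x ^ 2 - 7 * x + 1 with hf
  have hcont : ContinuousOn f (Set.Icc (0.21011 : ℝ) 0.2105) := by
    apply Continuous.continuousOn; continuity
  have hsub := intermediate_value_Ioo' (by norm_num : (0.21011 : ℝ) ≤ 0.2105) hcont
  have h0 : (0 : ℝ) ∈ Set.Ioo (f 0.2105) (f 0.21011) := by
    constructor <;> · simp only [hf]; norm_num
  obtain ⟨x, hx, hfx⟩ := hsub h0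
  obtain ⟨hx1, hx2⟩ := hx
  have hxpos : (0 : ℝ) < x := lt_trans (by norm_num) hx1
  refine ⟨⟨x, by linarith, hx2, hfx⟩, ⟨x, hfx, ?_, ?_⟩⟩
  · have : 1 / x > 1 / (0.2105 : ℝ) := by
      apply one_div_lt_one_div_of_lt hxpos hx2
    linarith [this, (by norm_num : (4.75 : ℝ) < 1 / (0.2105 : ℝ))]
  · have : 1 / x < 1 / (0.21011 : ℝ) := by
      apply one_div_lt_one_div_of_lt (by norm_num) hx1
    linarith [this, (by norm_num : 1 / (0.21011 : ℝ) < (4.76 : ℝ))]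
end
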